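/- Let f(d) = (( (a-d)^3/(n-1)^2 ) - 4(b-d)^3) / (12(a-b)) for d ∈ [a,b], where a < b and n ≥ 2. Then f attains its minimum at d = b - (b-a)/(2n-1), and the minimum value is (b-a)^2/(3(2n-1)^2). -/

import Mathlib

/-!
Writing `u = d - a`, `v = b - d` and `p = 2(n - 1)`, one has
`f d = (u³/p² + v³/1²) / (3(b - a))`. The two-term Radon inequality
`(u + v)³/(p + q)² ≤ u³/p² + v³/q²`, with equality when `u : v = p : q`, gives the minimum
`(b - a)³/(2n - 1)²` of the numerator, attained at `b - d = (b - a)/(2n - 1)`.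
-/

open Set

lemma add_pow_three_div_sq_le {p q u v : ℝ} (hp : 0 < p) (hq : 0 < q) (hu : 0 ≤ u)
    (hv : 0 ≤ v) : (u + v) ^ 3 / (p + q) ^ 2 ≤ u ^ 3 / p ^ 2 + v ^ 3 / q ^ 2 := by
  have gap : u ^ 3 / p ^ 2 + v ^ 3 / q ^ 2 - (u + v) ^ 3 / (p + q) ^ 2 =
      (u * q - v * p) ^ 2 * (q * (2 * p + q) * u + p * (p + 2 * q) * v) /
        (p ^ 2 * q ^ 2 * (p + q) ^ 2) := by
    field_simp
    ring
  have : 0 ≤ (u * q - v * p) ^ 2 * (q * (2 * p + q) * u + p * (p + 2 * q) * v) /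
      (p ^ 2 * q ^ 2 * (p + q) ^ 2) := by positivity
  linarith

lemma mul_pow_three_div_sq (k x : ℝ) : (k * x) ^ 3 / x ^ 2 = k ^ 3 * x := by
  rcases eq_or_ne x 0 with rfl | hx
  · simp
  · field_simp

lemma mul_pow_three_div_sq_add_mul_pow_three_div_sq (k p q : ℝ) :
    (k * p) ^ 3 / p ^ 2 + (k * q) ^ 3 / q ^ 2 = (k * p + k * q) ^ 3 / (p + q) ^ 2 := by
  rw [← mul_add, mul_pow_three_div_sq, mul_pow_three_div_sq, mul_pow_three_div_sq, mul_add]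

theorem stmt3 (a b : ℝ) (hab : a < b) (n : ℕ) (hn : 2 ≤ n)
    (f : ℝ → ℝ)
    (hf : ∀ d, f d = ((a - d)^3 / ((n : ℝ) - 1)^2 - 4 * (b - d)^3) / (12 * (a - b))) :
    IsMinOn f (Set.Icc a b) (b - (b - a) / (2 * (n : ℝ) - 1)) ∧
    f (b - (b - a) / (2 * (n : ℝ) - 1)) = (b - a)^2 / (3 * (2 * (n : ℝ) - 1)^2) := by
  have hn' : (2 : ℝ) ≤ n := by exact_mod_cast hn
  set p : ℝ := 2 * ((n : ℝ) - 1) with hp_def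
  have hp : 0 < p := by linarith
  have hp1 : p + 1 = 2 * (n : ℝ) - 1 := by ring
  have hf_radon : ∀ d, f d = ((d - a) ^ 3 / p ^ 2 + (b - d) ^ 3 / 1 ^ 2) / (3 * (b - a)) := by
    intro d
    have hn1 : (n : ℝ) - 1 ≠ 0 := by linarith
    have hba : b - a ≠ 0 := by linarith
    rw [hf, hp_def, show a - b = -(b - a) by ring]
    field_simp
    ring
  set k := (b - a) / (2 * (n : ℝ) - 1)
  have hk : b - k - a = k * p := by
    simp only [k, ← hp1]
    field_simp
    ring
  have hf_min : f (b - k) = (b - a) ^ 3 / (p + 1) ^ 2 / (3 * (b - a)) := by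
    rw [hf_radon, hk, show b - (b - k) = k * 1 by ring,
      mul_pow_three_div_sq_add_mul_pow_three_div_sq, ← hk, show b - k - a + k * 1 = b - a by ring]
  refine ⟨fun d ⟨had, hdb⟩ => ?_, ?_⟩
  · rw [mem_ofPred_eq, hf_min, hf_radon]
    gcongr
    simpa using add_pow_three_div_sq_le hp one_pos (sub_nonneg.2 had) (sub_nonneg.2 hdb)
  · rw [hf_min, hp1]
    field_simp
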